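/- Let α ∈ (0, 1], C_g ≥ 0, and let g : [0,1] → ℝ be a function satisfying |g(s₁) − g(s₂)| ≤ C_g |s₁ − s₂|^α for all s₁, s₂ ∈ [0,1]. For j ∈ ℕ, k ∈ {0, …, 2^j − 1} and t ∈ [0,1], set a_{j,k}(t) = ∫₀^t g(s) ψ_{j,k}(s) ds. Then for every j ∈ ℕ, every k ∈ {0, …, 2^j − 1} and every t ∈ [0,1] with t ≥ (k+1)/2^j, one has |a_{j,k}(t)| ≤ C_g 2^{−j(α + 1/2)}. -/

import Mathlib

open MeasureTheory Set

/-- The Haar wavelet `ψ_{j,k} = 2^{j/2} (𝟙_{[k/2^j,(2k+1)/2^{j+1})} − 𝟙_{[(2k+1)/2^{j+1},(k+1)/2^j)})`. -/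
noncomputable def haarPsi (j k : ℕ) (s : ℝ) : ℝ :=
  2 ^ ((j : ℝ) / 2) *
    ((Set.Ico ((k : ℝ) / 2 ^ j) ((2 * (k : ℝ) + 1) / 2 ^ (j + 1))).indicator 1 s -
      (Set.Ico ((2 * (k : ℝ) + 1) / 2 ^ (j + 1)) (((k : ℝ) + 1) / 2 ^ j)).indicator 1 s)

/-!
For `t ≥ (k+1)/2^j` the whole support of `ψ_{j,k}` lies in `[0,t]`, so with `a = k/2^j` and
`q = 2^{-(j+1)}` the coefficient equals `2^{j/2} (∫_a^{a+q} g - ∫_{a+q}^{a+2q} g)`, which after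
shifting the second integral is `2^{j/2} ∫_a^{a+q} (g(s) - g(s+q)) ds`. The Hölder condition bounds
the integrand by `C_g q^α`, so `|a_{j,k}(t)| ≤ C_g 2^{j/2} q^{α+1} ≤ C_g 2^{-j(α+1/2)}`.
-/

open scoped NNReal

theorem holderOnWith_of_dist_le {X Y : Type*} [PseudoMetricSpace X] [PseudoMetricSpace Y]
    {C r : ℝ≥0} {f : X → Y} {s : Set X}
    (h : ∀ x ∈ s, ∀ y ∈ s, dist (f x) (f y) ≤ C * dist x y ^ (r : ℝ)) :
    HolderOnWith C r f s := by
  intro x hx y hy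
  rw [edist_nndist, edist_nndist, ← ENNReal.coe_rpow_of_nonneg _ r.coe_nonneg, ← ENNReal.coe_mul,
    ENNReal.coe_le_coe, ← NNReal.coe_le_coe]
  exact h x hx y hy

theorem continuousOn_of_abs_sub_le_mul_rpow {f : ℝ → ℝ} {s : Set ℝ} {C r : ℝ} (hC : 0 ≤ C)
    (hr : 0 < r) (h : ∀ x ∈ s, ∀ y ∈ s, |f x - f y| ≤ C * |x - y| ^ r) : ContinuousOn f s := by
  refine (holderOnWith_of_dist_le (C := C.toNNReal) (r := r.toNNReal) fun x hx y hy => ?_)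
    |>.continuousOn (Real.toNNReal_pos.2 hr)
  simpa [Real.dist_eq, hC, hr.le] using h x hx y hy

theorem intervalIntegral.integral_indicator_Ico {f : ℝ → ℝ} {u v a b : ℝ} (hu : u ≤ a) (hab : a ≤ b)
    (hv : b ≤ v) : ∫ s in u..v, (Ico a b).indicator f s = ∫ s in a..b, f s := by
  have hIoc : (Ico a b).indicator f =ᵐ[volume] (Ioc a b).indicator f :=
    indicator_ae_eq_of_ae_eq_set Ico_ae_eq_Ioc
  rw [intervalIntegral.integral_congr_ae (hIoc.mono fun _ hx _ => hx),
    intervalIntegral.integral_of_le (hu.trans (hab.trans hv)), intervalIntegral.integral_of_le hab,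
    MeasureTheory.integral_indicator measurableSet_Ioc, Measure.restrict_restrict measurableSet_Ioc,
    Ioc_inter_Ioc, max_eq_left hu, min_eq_left hv]

theorem intervalIntegral.integral_sub_integral_adjacent {g : ℝ → ℝ} {a q : ℝ}
    (h₁ : IntervalIntegrable g volume a (a + q))
    (h₂ : IntervalIntegrable g volume (a + q) (a + q + q)) :
    (∫ s in a..a + q, g s) - ∫ s in a + q..a + q + q, g s = ∫ s in a..a + q, (g s - g (s + q)) := by
  have h₂' : IntervalIntegrable (fun s => g (s + q)) volume a (a + q) := by
    simpa using h₂.comp_add_right q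
  rw [intervalIntegral.integral_sub h₁ h₂', intervalIntegral.integral_comp_add_right]

theorem intervalIntegral.abs_integral_sub_shift_le {g : ℝ → ℝ} {a q C r : ℝ} (hq : 0 ≤ q)
    (hg : ∀ s₁ ∈ Icc a (a + q + q), ∀ s₂ ∈ Icc a (a + q + q), |g s₁ - g s₂| ≤ C * |s₁ - s₂| ^ r) :
    |∫ s in a..a + q, (g s - g (s + q))| ≤ C * q ^ r * q := by
  have hbound : ∀ s ∈ uIoc a (a + q), ‖g s - g (s + q)‖ ≤ C * q ^ r := by
    intro s hs
    rw [uIoc_of_le (by linarith)] at hs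
    have h := hg s ⟨hs.1.le, by linarith [hs.2]⟩ (s + q) ⟨by linarith [hs.1], by linarith [hs.2]⟩
    rwa [sub_add_cancel_left, abs_neg, abs_of_nonneg hq] at h
  simpa [abs_of_nonneg hq] using intervalIntegral.norm_integral_le_of_norm_le_const hbound

theorem intervalIntegral.integral_mul_indicator_sub_indicator {g : ℝ → ℝ} {u v a q : ℝ} (hq : 0 ≤ q)
    (hu : u ≤ a) (hv : a + q + q ≤ v) (hg : IntegrableOn g (Icc a (a + q + q))) :
    ∫ s in u..v, g s * ((Ico a (a + q)).indicator 1 s - (Ico (a + q) (a + q + q)).indicator 1 s)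
      = ∫ s in a..a + q, (g s - g (s + q)) := by
  have hi : ∀ {b c}, a ≤ b → c ≤ a + q + q →
      IntervalIntegrable ((Ico b c).indicator g) volume u v := fun hb hc =>
    ((integrable_indicator_iff measurableSet_Ico).2
      (hg.mono_set (Ico_subset_Icc_self.trans (Icc_subset_Icc hb hc)))).intervalIntegrable
  have hj : ∀ {b c}, a ≤ b → b ≤ c → c ≤ a + q + q → IntervalIntegrable g volume b c :=
    fun hb hbc hc =>
      (hg.mono_set (by rw [uIcc_of_le hbc]; exact Icc_subset_Icc hb hc)).intervalIntegrable
  have hpt : ∀ s, g s * ((Ico a (a + q)).indicator 1 s - (Ico (a + q) (a + q + q)).indicator 1 s)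
      = (Ico a (a + q)).indicator g s - (Ico (a + q) (a + q + q)).indicator g s := by
    intro s
    simp only [indicator_apply, Pi.one_apply]
    split_ifs <;> ring
  simp_rw [hpt]
  rw [intervalIntegral.integral_sub (hi le_rfl (by linarith)) (hi (by linarith) le_rfl),
    intervalIntegral.integral_indicator_Ico hu (by linarith) (by linarith),
    intervalIntegral.integral_indicator_Ico (by linarith) (by linarith) hv,
    intervalIntegral.integral_sub_integral_adjacent (hj le_rfl (by linarith) (by linarith))
      (hj (by linarith) (by linarith) le_rfl)]

theorem succ_div_two_pow_eq (j k : ℕ) :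
    ((k : ℝ) + 1) / 2 ^ j = k / 2 ^ j + 1 / 2 ^ (j + 1) + 1 / 2 ^ (j + 1) := by
  field_simp; ring

theorem haarPsi_eq_indicator (j k : ℕ) (s : ℝ) :
    haarPsi j k s = 2 ^ ((j : ℝ) / 2) *
      ((Ico ((k : ℝ) / 2 ^ j) (k / 2 ^ j + 1 / 2 ^ (j + 1))).indicator 1 s -
        (Ico ((k : ℝ) / 2 ^ j + 1 / 2 ^ (j + 1))
          (k / 2 ^ j + 1 / 2 ^ (j + 1) + 1 / 2 ^ (j + 1))).indicator 1 s) := by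
  have hm : (2 * (k : ℝ) + 1) / 2 ^ (j + 1) = k / 2 ^ j + 1 / 2 ^ (j + 1) := by
    field_simp; ring
  rw [haarPsi, hm, succ_div_two_pow_eq]

theorem two_rpow_half_mul_le {α : ℝ} (hα : -1 ≤ α) (j : ℕ) :
    2 ^ ((j : ℝ) / 2) * ((1 / 2 ^ (j + 1) : ℝ) ^ α * (1 / 2 ^ (j + 1))) ≤
      2 ^ (-(j : ℝ) * (α + 1 / 2)) := by
  have hq : (1 / 2 ^ (j + 1) : ℝ) = 2 ^ (-((j : ℝ) + 1)) := by
    rw [Real.rpow_neg zero_le_two, one_div, ← Real.rpow_natCast]; push_cast; rfl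
  rw [hq, ← Real.rpow_mul zero_le_two, ← Real.rpow_add two_pos, ← Real.rpow_add two_pos]
  exact Real.rpow_le_rpow_of_exponent_le one_le_two (by nlinarith)

theorem statement8 (α : ℝ) (hα0 : 0 < α) (Cg : ℝ) (hCg : 0 ≤ Cg)
    (g : ℝ → ℝ)
    (hg : ∀ s₁ ∈ Set.Icc (0 : ℝ) 1, ∀ s₂ ∈ Set.Icc (0 : ℝ) 1,
      |g s₁ - g s₂| ≤ Cg * |s₁ - s₂| ^ α) :
    ∀ (j k : ℕ), k < 2 ^ j → ∀ t ∈ Set.Icc (0 : ℝ) 1,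
      ((k : ℝ) + 1) / 2 ^ j ≤ t →
      |∫ s in (0 : ℝ)..t, g s * haarPsi j k s| ≤
        Cg * 2 ^ (-(j : ℝ) * (α + 1 / 2)) := by
  intro j k _ t ht hbt
  set a : ℝ := k / 2 ^ j
  set q : ℝ := 1 / 2 ^ (j + 1)
  have hq : 0 ≤ q := by positivity
  have hb : ((k : ℝ) + 1) / 2 ^ j = a + q + q := succ_div_two_pow_eq j k
  have hsub : Icc a (a + q + q) ⊆ Icc 0 1 := Icc_subset_Icc (by positivity) (by linarith [ht.2])
  have hgI : IntegrableOn g (Icc a (a + q + q)) :=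
    ((continuousOn_of_abs_sub_le_mul_rpow hCg hα0 hg).mono hsub).integrableOn_Icc
  simp_rw [haarPsi_eq_indicator, mul_left_comm (g _), intervalIntegral.integral_const_mul]
  rw [intervalIntegral.integral_mul_indicator_sub_indicator hq (by positivity) (by linarith) hgI,
    abs_mul, abs_of_pos (by positivity)]
  calc _ ≤ 2 ^ ((j : ℝ) / 2) * (Cg * q ^ α * q) := by
        gcongr
        exact intervalIntegral.abs_integral_sub_shift_le hq fun x hx y hy =>
          hg x (hsub hx) y (hsub hy)
    _ = Cg * (2 ^ ((j : ℝ) / 2) * (q ^ α * q)) := by ring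
    _ ≤ _ := by gcongr; exact two_rpow_half_mul_le (by linarith) j
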